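/- In a Cu-semigroup S, if elements with a 'compact ideal generator' are dense in the following sense — for all x', x with x' ≪ x there exist y', y with x' ≪ y' ≪ y ≪ x and y ≤ ∞·y' — then for every pair c' ≪ c in S there exist e', e with c' ≪ e' ≪ e ≪ c and e ≪ ∞·e'. -/

import Mathlib

/-- A Cu-semigroup: a positively ordered abelian monoid in which every
increasing sequence has a supremum and addition preserves such suprema. -/
class CuSemigroup (S : Type*) extends AddCommMonoid S, PartialOrder S where
  add_le_add' : ∀ {a b c d : S}, a ≤ b → c ≤ d → a + c ≤ b + d
  zero_le' : ∀ a : S, 0 ≤ a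
  /-- supremum of an increasing sequence -/
  seqSup : (ℕ → S) → S
  le_seqSup : ∀ (f : ℕ → S), Monotone f → ∀ n, f n ≤ seqSup f
  seqSup_le : ∀ (f : ℕ → S), Monotone f → ∀ b : S, (∀ n, f n ≤ b) → seqSup f ≤ b
  add_seqSup : ∀ (f : ℕ → S) (a : S), Monotone f →
    seqSup (fun n => a + f n) = a + seqSup f

variable {S : Type*} [CuSemigroup S]

/-- The way-below relation in a Cu-semigroup. -/
def wayBelow (x y : S) : Prop :=
  ∀ f : ℕ → S, Monotone f → y ≤ CuSemigroup.seqSup f → ∃ n, x ≤ f n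

infix:50 " ≪ " => wayBelow

/-- ∞·x := sup_n (n·x). -/
def infty (x : S) : S := CuSemigroup.seqSup (fun n => n • x)

theorem wayBelow.le {a b : S} (hab : a ≪ b) : a ≤ b :=
  let ⟨_, h⟩ := hab (fun _ => b) monotone_const (CuSemigroup.le_seqSup _ monotone_const 0)
  h

theorem wayBelow.trans_le {a b c : S} (hab : a ≪ b) (hbc : b ≤ c) : a ≪ c :=
  fun f hf hc => hab f hf (hbc.trans hc)

theorem stmt0
    (hdense : ∀ x' x : S, x' ≪ x →
      ∃ y' y : S, x' ≪ y' ∧ y' ≪ y ∧ y ≪ x ∧ y ≤ infty y')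
    (c' c : S) (h : c' ≪ c) :
    ∃ e' e : S, c' ≪ e' ∧ e' ≪ e ∧ e ≪ c ∧ e ≪ infty e' := by
  obtain ⟨y', y, hc'y', hy'y, hyc, hy_le⟩ := hdense c' c h
  -- Density applied once more, inside `y' ≪ y`, gives `w ≪ y ≤ ∞·y'`: take `e' := y'`, `e := w`.
  obtain ⟨w', w, hy'w', hw'w, hwy, -⟩ := hdense y' y hy'y
  exact ⟨y', w, hc'y', hy'w'.trans_le hw'w.le, hwy.trans_le hyc.le, hwy.trans_le hy_le⟩
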